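/- In a bicocycle double cross product group M _γ⋈_θ H, the inverse of an element of the form (x, 1) is (x^r, θ(x, x^r)^r), and the inverse of an element of the form (e, h) is (γ(h^ℓ, h)^ℓ, h^ℓ), where x^r denotes a right inverse of x for ·, h^ℓ a left inverse of h for ∗, and the superscripts r, ℓ denote right/left inverses in the respective operations. -/
import Mathlib

/-- The bicocycle double cross product multiplication on `M × H`:
`(x,h)(x',h') = ( x·[varφ(h,x')·γ(ψ(h,x'),h')], [θ(x,varφ(h,x'))∗ψ(h,x')]∗h' )`. -/
def bdcpMul {M H : Type*}
    (vphi : H → M → M) (psi : H → M → H) (phi : M → M → M)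
    (th : M → M → H) (mu : H → H → H) (gam : H → H → M)
    (p q : M × H) : M × H :=
  (phi p.1 (phi (vphi p.2 q.1) (gam (psi p.2 q.1) q.2)),
   mu (mu (th p.1 (vphi p.2 q.1)) (psi p.2 q.1)) q.2)

/-- The conditions of the bicocycle double cross product construction for groups
(Proposition 2.3): normalization, unit laws, the eight mixed associativity-type
identities, and existence of one-sided inverses. -/
def BicocycleGroupConds {M H : Type*} (e : M) (o : H)
    (vphi : H → M → M) (psi : H → M → H) (phi : M → M → M)
    (th : M → M → H) (mu : H → H → H) (gam : H → H → M) : Prop :=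
  -- normalization
  (∀ x, vphi o x = x) ∧ (∀ h, vphi h e = e) ∧
  (∀ h, psi h e = h) ∧ (∀ x, psi o x = o) ∧
  (phi e e = e) ∧ (mu o o = o) ∧ (th e e = o) ∧ (gam o o = e) ∧
  -- unit laws for `·` and `∗`
  (∀ x, phi e x = x) ∧ (∀ x, phi x e = x) ∧
  (∀ h, mu o h = h) ∧ (∀ h, mu h o = h) ∧
  -- normalization of `θ` and `γ`
  (∀ x, th x e = o) ∧ (∀ x, th e x = o) ∧
  (∀ h, gam h o = e) ∧ (∀ h, gam o h = e) ∧
  -- (3.13)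
  (∀ h x' x'' h'',
    phi (vphi h (phi x' x'')) (gam (psi h (phi x' x'')) (mu (th x' x'') h'')) =
      phi (vphi h x') (phi (vphi (psi h x') x'') (gam (psi (psi h x') x'') h''))) ∧
  -- (3.14)
  (∀ h x' x'' h'',
    mu (psi h (phi x' x'')) (mu (th x' x'') h'') =
      mu (mu (th (vphi h x') (vphi (psi h x') x'')) (psi (psi h x') x'')) h'') ∧
  -- (3.15)
  (∀ x h h' x'',
    mu (th (phi x (gam h h')) (vphi (mu h h') x'')) (psi (mu h h') x'') =
      mu (mu (th x (vphi h (vphi h' x''))) (psi h (vphi h' x''))) (psi h' x'')) ∧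
  -- (3.16)
  (∀ x h h' x'',
    phi (phi x (gam h h')) (vphi (mu h h') x'') =
      phi x (phi (vphi h (vphi h' x'')) (gam (psi h (vphi h' x'')) (psi h' x'')))) ∧
  -- (3.17)
  (∀ x x' x'' h'',
    phi x (phi x' x'') =
      phi (phi x x') (phi (vphi (th x x') x'') (gam (psi (th x x') x'') h''))) ∧
  -- (3.18)
  (∀ x x' x'' h'',
    mu (th x (phi x' x'')) (mu (th x' x'') h'') =
      mu (mu (th (phi x x') (vphi (th x x') x'')) (psi (th x x') x'')) h'') ∧
  -- (3.19)
  (∀ x h h' h'',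
    phi (phi x (gam h h')) (gam (mu h h') h'') =
      phi x (phi (vphi h (gam h' h'')) (gam (psi h (gam h' h'')) (mu h' h'')))) ∧
  -- (3.20)
  (∀ (x : M) h h' h'',
    mu (mu h h') h'' =
      mu (mu (th x (vphi h (gam h' h''))) (psi h (gam h' h''))) (mu h' h'')) ∧
  -- existence of right and left inverses for `·` and `∗`
  (∀ x : M, ∃ xr, phi x xr = e) ∧ (∀ h : H, ∃ hr, mu h hr = o) ∧
  (∀ x : M, ∃ xl, phi xl x = e) ∧ (∀ h : H, ∃ hl, mu hl h = o)

/-- In a bicocycle double cross product group `M _γ⋈_θ H`, the inverse of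
`(x, 1)` is `(x^r, θ(x, x^r)^r)` and the inverse of `(e, h)` is `(γ(h^ℓ, h)^ℓ, h^ℓ)`,
where the superscripts `r`/`ℓ` denote right/left inverses for `·` resp. `∗`. -/
theorem bicocycle_double_cross_product_group_inverses
    (M H : Type*) (e : M) (o : H)
    (vphi : H → M → M) (psi : H → M → H) (phi : M → M → M)
    (th : M → M → H) (mu : H → H → H) (gam : H → H → M)
    (hconds : BicocycleGroupConds e o vphi psi phi th mu gam) :
    -- `(x,1)⁻¹ = (x^r, θ(x,x^r)^r)`
    (∀ x xr kr : _, phi x xr = e → mu (th x xr) kr = o →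
      bdcpMul vphi psi phi th mu gam (x, o) (xr, kr) = (e, o) ∧
      bdcpMul vphi psi phi th mu gam (xr, kr) (x, o) = (e, o)) ∧
    -- `(e,h)⁻¹ = (γ(h^ℓ,h)^ℓ, h^ℓ)`
    (∀ h hl w : _, mu hl h = o → phi w (gam hl h) = e →
      bdcpMul vphi psi phi th mu gam (e, h) (w, hl) = (e, o) ∧
      bdcpMul vphi psi phi th mu gam (w, hl) (e, h) = (e, o)) := by
  obtain ⟨n1, n2, n3, n4, -, -, -, -, u1, u2, u3, u4, t1, t2, g1, g2,
    i13, i14, i15, i16, i17, i18, i19, i20, ivr, ivr2, ivl, ivl2⟩ := hconds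
  set m := bdcpMul vphi psi phi th mu gam with hm
  -- elementary computations
  have E1 : ∀ x h, m (x, o) (e, h) = (x, h) := by
    intro x h; simp [hm, bdcpMul, n1, n2, n3, n4, u1, u2, u3, u4, t1, t2, g1, g2]
  have E4 : ∀ h h', m (e, h) (e, h') = (gam h h', mu h h') := by
    intro h h'; simp [hm, bdcpMul, n1, n2, n3, n4, u1, u2, u3, u4, t1, t2, g1, g2]
  have E5 : ∀ x y k, m (x, o) (y, k) = (phi x y, mu (th x y) k) := by
    intro x y k; simp [hm, bdcpMul, n1, n2, n3, n4, u1, u2, u3, u4, t1, t2, g1, g2]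
  have E6 : ∀ y k h, m (y, k) (e, h) = (phi y (gam k h), mu k h) := by
    intro y k h; simp [hm, bdcpMul, n1, n2, n3, n4, u1, u2, u3, u4, t1, t2, g1, g2]
  -- unit laws
  have U1 : ∀ p, m p (e, o) = p := by
    rintro ⟨x, h⟩; simp [hm, bdcpMul, n1, n2, n3, n4, u1, u2, u3, u4, t1, t2, g1, g2]
  have U2 : ∀ p, m (e, o) p = p := by
    rintro ⟨x, h⟩; simp [hm, bdcpMul, n1, n2, n3, n4, u1, u2, u3, u4, t1, t2, g1, g2]
  -- four special associativity instances coming from the eight identities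
  have A1 : ∀ h x' r, m (m (e, h) (x', o)) r = m (e, h) (m (x', o) r) := by
    rintro h x' ⟨x'', h''⟩
    simp only [hm, bdcpMul, n1, n2, n3, n4, u1, u2, u3, u4, t1, t2, g1, g2, Prod.mk.injEq]
    exact ⟨(i13 h x' x'' h'').symm, (i14 h x' x'' h'').symm⟩
  have A2 : ∀ p h' x'', m (m p (e, h')) (x'', o) = m p (m (e, h') (x'', o)) := by
    rintro ⟨x, h⟩ h' x''
    simp only [hm, bdcpMul, n1, n2, n3, n4, u1, u2, u3, u4, t1, t2, g1, g2, Prod.mk.injEq]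
    exact ⟨i16 x h h' x'', i15 x h h' x''⟩
  have A3 : ∀ x x' r, m (m (x, o) (x', o)) r = m (x, o) (m (x', o) r) := by
    rintro x x' ⟨x'', h''⟩
    simp only [hm, bdcpMul, n1, n2, n3, n4, u1, u2, u3, u4, t1, t2, g1, g2, Prod.mk.injEq]
    exact ⟨(i17 x x' x'' h'').symm, (i18 x x' x'' h'').symm⟩
  have A4 : ∀ p h' h'', m (m p (e, h')) (e, h'') = m p (m (e, h') (e, h'')) := by
    rintro ⟨x, h⟩ h' h''
    simp only [hm, bdcpMul, n1, n2, n3, n4, u1, u2, u3, u4, t1, t2, g1, g2, Prod.mk.injEq]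
    exact ⟨i19 x h h' h'', i20 x h h' h''⟩
  -- A5 : left M-generator, right H-generator, arbitrary middle
  have A5 : ∀ x q k, m (m (x, o) q) (e, k) = m (x, o) (m q (e, k)) := by
    rintro x ⟨a, b⟩ k
    calc m (m (x, o) (a, b)) (e, k)
        = m (m (x, o) (m (a, o) (e, b))) (e, k) := by rw [E1]
      _ = m (m (m (x, o) (a, o)) (e, b)) (e, k) := by rw [A3]
      _ = m (m (x, o) (a, o)) (m (e, b) (e, k)) := by rw [A4]
      _ = m (x, o) (m (a, o) (m (e, b) (e, k))) := by rw [A3]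
      _ = m (x, o) (m (m (a, o) (e, b)) (e, k)) := by rw [A4]
      _ = m (x, o) (m (a, b) (e, k)) := by rw [E1]
  -- D : left decomposition through arbitrary second factor
  have D : ∀ x h q, m (x, h) q = m (x, o) (m (e, h) q) := by
    rintro x h ⟨a, b⟩
    have h5 := congrArg Prod.snd (A5 x (vphi h a, psi h a) b)
    simp only [hm, bdcpMul, n1, n2, n3, n4, u1, u2, u3, u4, t1, t2, g1, g2] at h5 ⊢
    exact Prod.ext rfl h5
  -- S : right decomposition through arbitrary first factor
  have S : ∀ p c k, m p (c, k) = m (m p (c, o)) (e, k) := by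
    rintro ⟨x, h⟩ c k
    calc m (x, h) (c, k)
        = m (x, o) (m (e, h) (c, k)) := D x h _
      _ = m (x, o) (m (e, h) (m (c, o) (e, k))) := by rw [E1]
      _ = m (x, o) (m (m (e, h) (c, o)) (e, k)) := by rw [A1]
      _ = m (m (x, o) (m (e, h) (c, o))) (e, k) := by rw [A5]
      _ = m (m (m (x, o) (e, h)) (c, o)) (e, k) := by rw [A2]
      _ = m (m (x, h) (c, o)) (e, k) := by rw [E1]
  -- left M-generator, arbitrary middle and right
  have LM : ∀ x q r, m (m (x, o) q) r = m (x, o) (m q r) := by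
    rintro x q ⟨c, k⟩
    -- A6' : right M-generator case
    have A6 : ∀ q c, m (m (x, o) q) (c, o) = m (x, o) (m q (c, o)) := by
      rintro ⟨a, b⟩ c
      calc m (m (x, o) (a, b)) (c, o)
          = m (m (m (x, o) (a, o)) (e, b)) (c, o) := by rw [A3, E1]
        _ = m (m (x, o) (a, o)) (m (e, b) (c, o)) := by rw [A2]
        _ = m (x, o) (m (a, o) (m (e, b) (c, o))) := by rw [A3]
        _ = m (x, o) (m (m (a, o) (e, b)) (c, o)) := by rw [A2]
        _ = m (x, o) (m (a, b) (c, o)) := by rw [E1]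
    calc m (m (x, o) q) (c, k)
        = m (m (m (x, o) q) (c, o)) (e, k) := S _ c k
      _ = m (m (x, o) (m q (c, o))) (e, k) := by rw [A6]
      _ = m (x, o) (m (m q (c, o)) (e, k)) := by rw [A5]
      _ = m (x, o) (m q (c, k)) := by rw [← S]
  -- left H-generator, arbitrary middle and right
  have LH : ∀ h q r, m (m (e, h) q) r = m (e, h) (m q r) := by
    rintro h q ⟨c, k⟩
    have A6 : ∀ (q : M × H) c, m (m (e, h) q) (c, o) = m (e, h) (m q (c, o)) := by
      rintro ⟨a, b⟩ c
      calc m (m (e, h) (a, b)) (c, o)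
          = m (m (m (e, h) (a, o)) (e, b)) (c, o) := by rw [A1, E1]
        _ = m (m (e, h) (a, o)) (m (e, b) (c, o)) := by rw [A2]
        _ = m (e, h) (m (a, o) (m (e, b) (c, o))) := by rw [A1]
        _ = m (e, h) (m (m (a, o) (e, b)) (c, o)) := by rw [A2]
        _ = m (e, h) (m (a, b) (c, o)) := by rw [E1]
    have A7 : ∀ (q : M × H) k, m (m (e, h) q) (e, k) = m (e, h) (m q (e, k)) := by
      rintro ⟨a, b⟩ k
      calc m (m (e, h) (a, b)) (e, k)
          = m (m (m (e, h) (a, o)) (e, b)) (e, k) := by rw [A1, E1]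
        _ = m (m (e, h) (a, o)) (m (e, b) (e, k)) := by rw [A4]
        _ = m (e, h) (m (a, o) (m (e, b) (e, k))) := by rw [A1]
        _ = m (e, h) (m (m (a, o) (e, b)) (e, k)) := by rw [A4]
        _ = m (e, h) (m (a, b) (e, k)) := by rw [E1]
    calc m (m (e, h) q) (c, k)
        = m (m (m (e, h) q) (c, o)) (e, k) := S _ c k
      _ = m (m (e, h) (m q (c, o))) (e, k) := by rw [A6]
      _ = m (e, h) (m (m q (c, o)) (e, k)) := by rw [A7]
      _ = m (e, h) (m q (c, k)) := by rw [← S]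
  -- full associativity
  have assoc : ∀ p q r, m (m p q) r = m p (m q r) := by
    rintro ⟨x, h⟩ q r
    calc m (m (x, h) q) r
        = m (m (x, o) (m (e, h) q)) r := by rw [D x h q]
      _ = m (x, o) (m (m (e, h) q) r) := LM _ _ _
      _ = m (x, o) (m (e, h) (m q r)) := by rw [LH h q r]
      _ = m (x, h) (m q r) := (D x h _).symm
  -- every element has a right inverse
  have RInv : ∀ p, ∃ q, m p q = (e, o) := by
    rintro ⟨x, h⟩
    obtain ⟨hr, hhr⟩ := ivr2 h
    obtain ⟨gr, hgr⟩ := ivr (gam h hr)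
    obtain ⟨kr, hkr⟩ := ivr2 (th (gam h hr) gr)
    obtain ⟨xr, hxr⟩ := ivr x
    obtain ⟨kr', hkr'⟩ := ivr2 (th x xr)
    refine ⟨m (m (e, hr) (gr, kr)) (xr, kr'), ?_⟩
    have h1 : m (e, h) (m (m (e, hr) (gr, kr)) (xr, kr')) = (xr, kr') := by
      rw [← assoc (e, h) (m (e, hr) (gr, kr)) (xr, kr'),
        ← assoc (e, h) (e, hr) (gr, kr), E4, hhr, E5, hgr, hkr, U2]
    calc m (x, h) (m (m (e, hr) (gr, kr)) (xr, kr'))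
        = m (x, o) (m (e, h) (m (m (e, hr) (gr, kr)) (xr, kr'))) := D x h _
      _ = m (x, o) (xr, kr') := by rw [h1]
      _ = (e, o) := by rw [E5, hxr, hkr']
  -- in a monoid where every element has a right inverse, pq = 1 implies qp = 1
  have INV : ∀ p q, m p q = (e, o) → m q p = (e, o) := by
    intro p q hpq
    obtain ⟨c, hc⟩ := RInv q
    calc m q p = m (m q p) (e, o) := (U1 _).symm
      _ = m (m q p) (m q c) := by rw [hc]
      _ = m q (m p (m q c)) := assoc _ _ _
      _ = m q (m (m p q) c) := by rw [assoc p q c]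
      _ = m q (m (e, o) c) := by rw [hpq]
      _ = m q c := by rw [U2]
      _ = (e, o) := hc
  constructor
  · intro x xr kr hx hk
    have h1 : m (x, o) (xr, kr) = (e, o) := by rw [E5, hx, hk]
    exact ⟨h1, INV _ _ h1⟩
  · intro h hl w h1 h2
    have h3 : m (w, hl) (e, h) = (e, o) := by rw [E6, h1, h2]
    exact ⟨INV _ _ h3, h3⟩
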